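/- arXiv:2308.06421 — 2 statements merged into one kernel-verified Lean document; each statement's English description precedes it below -/
import Mathlib

section
/- For a sequence u of the form u[n] = C(n+m, m) · a^n with |a| < |z|, the Z-transform Σ_{n=0}^∞ z^{-n} u[n] converges and equals z^{m+1}/(z - a)^{m+1}. -/
/-!
Writing `z⁻¹ ^ n * a ^ n = (a / z) ^ n`, the Z-transform is the negative-binomial series
`∑ C(n+m, m) r ^ n = (1 - r)⁻¹ ^ (m + 1)` at `r = a / z`, which lies in the open unit disc
since `‖a‖ < ‖z‖`; and `(1 - a / z)⁻¹ = z / (z - a)`.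
-/

theorem hasSum_inv_pow_mul_choose_mul_pow {𝕜 : Type*} [NormedField 𝕜] (m : ℕ) {a z : 𝕜}
    (h : ‖a‖ < ‖z‖) :
    HasSum (fun n : ℕ => z⁻¹ ^ n * ((n + m).choose m * a ^ n))
      (z ^ (m + 1) / (z - a) ^ (m + 1)) := by
  have hz : z ≠ 0 := norm_pos_iff.1 ((norm_nonneg a).trans_lt h)
  have hr : ‖a / z‖ < 1 := by rwa [norm_div, div_lt_one (norm_pos_iff.2 hz)]
  convert hasSum_choose_mul_geometric_of_norm_lt_one m hr using 1
  · funext n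
    ring
  · rw [one_sub_div hz, div_pow, one_div_div]

/-- Z-transform of `C(n+m, m) * a^n` is `z^(m+1)/(z-a)^(m+1)` for `|a| < |z|`. -/
theorem stmt_2 (a z : ℂ) (m : ℕ) (h : ‖a‖ < ‖z‖) :
    HasSum (fun n : ℕ => (z⁻¹) ^ n * (((n + m).choose m : ℂ) * a ^ n))
      (z ^ (m + 1) / (z - a) ^ (m + 1)) :=
  hasSum_inv_pow_mul_choose_mul_pow m h
end

section
/- Characterisation of vanishing coefficients at a root via gcd: let u be an order-k linear recurrence sequence with Z-transform ψ(z)/χ_c(z), and let λ be a root of χ_c with multiplicity m. Then all coefficients b_0,...,b_{m-1} attached to λ in the exponential-polynomial closed form vanish if and only if (z-λ)^m divides gcd(ψ, χ_c); equivalently, at least one b_j is nonzero if and only if (z-λ) divides χ_c / gcd(ψ, χ_c). -/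
/-!
Multiplying the partial fraction decomposition by `χ_c` gives
`ψ = q · S + p · (z - λ)^m` with `S = ∑_{j<m} b_j z^{j+1} (z - λ)^{m-1-j}`. Since `q(λ) ≠ 0`,
`(z - λ)^m ∣ ψ` iff `(z - λ)^m ∣ S`, and peeling off the top term
`S_{m+1} = (z - λ) S_m + b_m z^{m+1}` shows (as `λ ≠ 0`) that this happens iff all `b_j` vanish.
As `(z - λ)^m ∣ χ_c`, this is divisibility of the gcd; the second equivalence is its negation,
read off from the multiplicity `m = mult_λ(gcd) + mult_λ(χ_c / gcd)`.
-/

open Polynomial Finset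

namespace Polynomial

variable {R : Type*} [CommRing R]

lemma sum_range_succ_mul_X_sub_C_pow (lam : R) (b : ℕ → R) (m : ℕ) :
    ∑ j ∈ range (m + 1), C (b j) * X ^ (j + 1) * (X - C lam) ^ (m + 1 - 1 - j) =
      (X - C lam) * ∑ j ∈ range m, C (b j) * X ^ (j + 1) * (X - C lam) ^ (m - 1 - j) +
        C (b m) * X ^ (m + 1) := by
  rw [sum_range_succ, mul_sum, Nat.add_sub_cancel, Nat.sub_self, pow_zero, mul_one]
  congr 1
  refine sum_congr rfl fun j hj => ?_
  rw [show m - j = m - 1 - j + 1 by have := mem_range.mp hj; omega, pow_succ]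
  ring

variable [IsDomain R]

lemma X_sub_C_pow_dvd_sum_iff {lam : R} (hlam : lam ≠ 0) (b : ℕ → R) (m : ℕ) :
    (X - C lam) ^ m ∣ ∑ j ∈ range m, C (b j) * X ^ (j + 1) * (X - C lam) ^ (m - 1 - j) ↔
      ∀ j < m, b j = 0 := by
  induction m with
  | zero => simp
  | succ m ih =>
    rw [sum_range_succ_mul_X_sub_C_pow]
    constructor
    · intro hdvd
      have htop : b m = 0 := by
        have : X - C lam ∣ C (b m) * X ^ (m + 1) :=
          (dvd_add_right (dvd_mul_right _ _)).mp ((dvd_pow_self _ m.succ_ne_zero).trans hdvd)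
        simpa [dvd_iff_isRoot, hlam] using this
      rw [htop, C_0, zero_mul, add_zero, pow_succ', mul_dvd_mul_iff_left (X_sub_C_ne_zero lam),
        ih] at hdvd
      intro j hj
      rcases Nat.lt_succ_iff_lt_or_eq.mp hj with hj | rfl
      exacts [hdvd j hj, htop]
    · intro hb
      rw [hb m m.lt_succ_self, C_0, zero_mul, add_zero, pow_succ']
      exact mul_dvd_mul_left _ (ih.mpr fun j hj => hb j (hj.trans m.lt_succ_self))

lemma X_sub_C_dvd_right_iff_not_pow_dvd_left {f g h : R[X]} {a : R} (hf : f = g * h)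
    (hf0 : f ≠ 0) : X - C a ∣ h ↔ ¬(X - C a) ^ f.rootMultiplicity a ∣ g := by
  have hgh : g * h ≠ 0 := hf ▸ hf0
  rw [← pow_one (X - C a), ← le_rootMultiplicity_iff (right_ne_zero_of_mul hgh), pow_one,
    ← le_rootMultiplicity_iff (left_ne_zero_of_mul hgh), hf, rootMultiplicity_mul hgh]
  omega

end Polynomial

theorem stmt_14_general (m : ℕ) (lam : ℂ) (hlam : lam ≠ 0)
    (χ ψ q p : Polynomial ℂ)
    (hfac : χ = (X - C lam) ^ m * q) (hq : q.eval lam ≠ 0)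
    (b : ℕ → ℂ)
    (hpf : ψ = q * (∑ j ∈ Finset.range m, C (b j) * X ^ (j + 1) * (X - C lam) ^ (m - 1 - j))
      + p * (X - C lam) ^ m) :
    ((∀ j < m, b j = 0) ↔ (X - C lam) ^ m ∣ EuclideanDomain.gcd ψ χ) ∧
    ((∃ j < m, b j ≠ 0) ↔ (X - C lam) ∣ χ / EuclideanDomain.gcd ψ χ) := by
  set g := EuclideanDomain.gcd ψ χ
  have hq0 : q ≠ 0 := fun h => hq (by simp [h])
  have hχ0 : χ ≠ 0 := hfac ▸ mul_ne_zero (pow_ne_zero _ (X_sub_C_ne_zero lam)) hq0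
  have hχmult : χ.rootMultiplicity lam = m := by
    rw [hfac, mul_comm, rootMultiplicity_mul_X_sub_C_pow hq0, rootMultiplicity_eq_zero hq,
      zero_add]
  have hψ : (X - C lam) ^ m ∣ ψ ↔ ∀ j < m, b j = 0 := by
    rw [hpf, dvd_add_left (dvd_mul_left _ _), ← X_sub_C_pow_dvd_sum_iff hlam]
    exact ⟨(prime_X_sub_C lam).pow_dvd_of_dvd_mul_left m (by rwa [dvd_iff_isRoot]),
      (Dvd.dvd.mul_left · q)⟩
  have hgcd : (X - C lam) ^ m ∣ g ↔ ∀ j < m, b j = 0 := by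
    rw [← hψ]
    exact ⟨fun h => h.trans (EuclideanDomain.gcd_dvd_left ψ χ),
      fun h => EuclideanDomain.dvd_gcd h (hfac ▸ dvd_mul_right _ _)⟩
  have hg0 : g ≠ 0 := fun h => hχ0 (zero_dvd_iff.mp (h ▸ EuclideanDomain.gcd_dvd_right ψ χ))
  have hquot : X - C lam ∣ χ / g ↔ ¬(X - C lam) ^ m ∣ g := by
    rw [← hχmult]
    exact X_sub_C_dvd_right_iff_not_pow_dvd_left
      (EuclideanDomain.mul_div_cancel' hg0 (EuclideanDomain.gcd_dvd_right ψ χ)).symm hχ0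
  refine ⟨hgcd.symm, ?_⟩
  simp only [hquot, hgcd, not_forall, exists_prop]

/-- Vanishing of the coefficients attached to a root `λ` of multiplicity `m`,
characterised via the gcd of the Z-transform numerator with `χ_c`. -/
theorem stmt_14 (k m : ℕ) (hm : 1 ≤ m) (lam : ℂ) (hlam : lam ≠ 0)
    (χ ψ q p : Polynomial ℂ) (hχ : χ.Monic) (hdeg : χ.natDegree = k)
    (hψdeg : ψ.natDegree ≤ k)
    (hfac : χ = (X - C lam) ^ m * q) (hq : q.eval lam ≠ 0)
    (b : ℕ → ℂ)
    (hpf : ψ = q * (∑ j ∈ Finset.range m, C (b j) * X ^ (j + 1) * (X - C lam) ^ (m - 1 - j))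
      + p * (X - C lam) ^ m) :
    ((∀ j < m, b j = 0) ↔ (X - C lam) ^ m ∣ EuclideanDomain.gcd ψ χ) ∧
    ((∃ j < m, b j ≠ 0) ↔ (X - C lam) ∣ χ / EuclideanDomain.gcd ψ χ) :=
  stmt_14_general m lam hlam χ ψ q p hfac hq b hpf
end
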